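/- arXiv:1509.04932 — 3 statements merged into one kernel-verified Lean document; each statement's English description precedes it below -/
import Mathlib

section
/- If the length of a shortest odd cycle (odd girth) of a graph G is l, then every odd cycle in the Cartesian product K₂ × G that contains a crossing edge (an edge joining the two copies of G) has length at least l + 2. -/
open SimpleGraph

/-- The `n`-dimensional hypercube: vertices are binary strings of length `n`
(indexed so that bit `i+1` of the paper is index `i`), adjacent iff they
differ in exactly one bit. -/
def hypercube (n : ℕ) : SimpleGraph (Fin n → Bool) where
  Adj u v := ∃! i, u i ≠ v i
  symm := by
    constructor
    rintro u v ⟨i, hi, hu⟩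
    exact ⟨i, hi.symm, fun j hj => hu j hj.symm⟩
  loopless := by
    constructor
    rintro u ⟨i, hi, -⟩
    exact hi rfl

/-- Skip relation: `u` and `v` differ exactly in the last `k` bits
(indices `0, …, k-1`). -/
def skipRel (n k : ℕ) (u v : Fin n → Bool) : Prop :=
  u ≠ v ∧ ∀ i : Fin n, (i.val < k → u i ≠ v i) ∧ (k ≤ i.val → u i = v i)

/-- The enhanced hypercube `Q_{n,k}`: hypercube edges together with skip edges. -/
def enhanced (n k : ℕ) : SimpleGraph (Fin n → Bool) where
  Adj u v := (hypercube n).Adj u v ∨ skipRel n k u v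
  symm := by
    constructor
    rintro u v (h | ⟨hne, h⟩)
    · exact Or.inl ((hypercube n).adj_symm h)
    · exact Or.inr ⟨hne.symm, fun i =>
        ⟨fun hi => ((h i).1 hi).symm, fun hi => ((h i).2 hi).symm⟩⟩
  loopless := by
    constructor
    rintro u (h | ⟨hne, -⟩)
    · exact (hypercube n).irrefl h
    · exact hne rfl

/-- The folded hypercube `FQ_n`: hypercube edges together with complementary edges. -/
def folded (n : ℕ) : SimpleGraph (Fin n → Bool) where
  Adj u v := (hypercube n).Adj u v ∨ (u ≠ v ∧ ∀ i, u i ≠ v i)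
  symm := by
    constructor
    rintro u v (h | ⟨hne, h⟩)
    · exact Or.inl ((hypercube n).adj_symm h)
    · exact Or.inr ⟨hne.symm, fun i => (h i).symm⟩
  loopless := by
    constructor
    rintro u (h | ⟨hne, -⟩)
    · exact (hypercube n).irrefl h
    · exact hne rfl

/-- The Cartesian product `K₂ × G`: two copies of `G` joined by crossing edges. -/
def K2Prod {V : Type*} (G : SimpleGraph V) : SimpleGraph (Bool × V) :=
  (completeGraph Bool) □ G

/-- The edge `e` lies on a cycle of length `l` in `G`. -/
def EdgeOnCycle {V : Type*} (G : SimpleGraph V) (e : Sym2 V) (l : ℕ) : Prop :=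
  ∃ (v : V) (c : G.Walk v v), c.IsCycle ∧ c.length = l ∧ e ∈ c.edges

/-!
Project a closed walk `c` of `K₂ □ G` onto the two factors: `c.length` is the number `k` of
crossing edges plus the length of the projection to `G`. The projection to `K₂` is a closed walk
in a bipartite graph, so `k` is even, and `k > 0` because `c` crosses; hence `k ≥ 2`. The
projection to `G` is therefore a closed walk of odd length, which contains an odd cycle, of length
at least `l`.
-/

namespace SimpleGraph.Walk

variable {V : Type*} {G : SimpleGraph V}

lemma exists_loop_of_not_isPath [DecidableEq V] {u v : V} (p : G.Walk u v) (hp : ¬p.IsPath) :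
    ∃ (w : V) (c : G.Walk w w) (q : G.Walk u v),
      0 < c.length ∧ q.length + c.length = p.length := by
  induction p with
  | nil => exact absurd IsPath.nil hp
  | @cons u u' v h p ih =>
    by_cases hpath : p.IsPath
    · have hu : u ∈ p.support := by simpa [cons_isPath_iff, hpath] using hp
      refine ⟨u, cons h (p.takeUntil u hu), p.dropUntil u hu, by simp, ?_⟩
      have := congrArg length (p.take_spec hu)
      simp only [length_append] at this
      simp only [length_cons]
      omega
    · obtain ⟨w, c, q, hc, hlen⟩ := ih hpath
      exact ⟨w, c, cons h q, hc, by simp only [length_cons]; omega⟩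

lemma exists_isCycle_odd_length_le [DecidableEq V] {v : V} (p : G.Walk v v) (hp : Odd p.length) :
    ∃ (w : V) (c : G.Walk w w), c.IsCycle ∧ Odd c.length ∧ c.length ≤ p.length := by
  induction hn : p.length using Nat.strong_induction_on generalizing v with
  | _ n ih =>
  cases p with
  | nil => simp at hp
  | @cons _ u _ h q =>
    by_cases hq : q.IsPath
    · have hq_length : q.length ≠ 0 := fun h0 => h.ne (q.eq_of_length_eq_zero h0).symm
      have h3 : 3 ≤ (cons h q).length := by
        obtain ⟨k, hk⟩ := hp
        simp only [length_cons] at hk ⊢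
        omega
      exact ⟨v, cons h q, isCycle_iff_isPath_tail_and_le_length.mpr ⟨by simpa using hq, h3⟩,
        hp, hn.le⟩
    · -- Cutting a loop off `q` leaves two shorter closed walks, one of them of odd length.
      obtain ⟨w, c, q', hc, hlen⟩ := q.exists_loop_of_not_isPath hq
      rw [length_cons] at hp hn
      have hsum : Odd ((cons h q').length + c.length) := by
        rwa [length_cons, add_right_comm, hlen]
      by_cases hc_even : Even c.length
      · have hodd := (Nat.odd_add.mp hsum).mpr hc_even
        obtain ⟨w', c', hc', hodd', hle⟩ :=
          ih _ (by simp only [length_cons]; omega) (cons h q') hodd rfl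
        exact ⟨w', c', hc', hodd', by simp only [length_cons] at hle ⊢; omega⟩
      · obtain ⟨w', c', hc', hodd', hle⟩ :=
          ih _ (by omega) c (Nat.not_even_iff_odd.mp hc_even) rfl
        exact ⟨w', c', hc', hodd', by omega⟩

lemma length_ofBoxProdLeft_pos {W : Type*} {H : SimpleGraph W} [DecidableEq W]
    [DecidableRel G.Adj] {x y : V × W} (w : (G □ H).Walk x y) {a b : V × W}
    (he : s(a, b) ∈ w.edges) (hab : a.1 ≠ b.1) :
    0 < w.ofBoxProdLeft.length := by
  induction w with
  | nil => simp at he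
  | @cons x z y h w ih =>
    rcases boxProd_adj.mp h with hG | ⟨hH, hx⟩
    · simp [ofBoxProdLeft, Or.by_cases, hG]
    · obtain ⟨x₁, x₂⟩ := x
      obtain ⟨z₁, z₂⟩ := z
      obtain rfl : x₁ = z₁ := hx
      have hw : s(a, b) ∈ w.edges := by
        rcases List.mem_cons.mp (edges_cons h w ▸ he) with hfirst | hrest
        · rcases Sym2.eq_iff.mp hfirst with ⟨rfl, rfl⟩ | ⟨rfl, rfl⟩ <;>
            exact absurd rfl hab
        · exact hrest
      simpa [ofBoxProdLeft, Or.by_cases, G.loopless.irrefl] using ih hw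

end SimpleGraph.Walk

theorem stmt0_general {V : Type*} (G : SimpleGraph V) (l : ℕ)
    (hmin : ∀ (v : V) (c : G.Walk v v), c.IsCycle → Odd c.length → l ≤ c.length) :
    ∀ (x : Bool × V) (c : (K2Prod G).Walk x x), c.IsCycle → Odd c.length →
      (∃ u : V, s(((true, u) : Bool × V), ((false, u) : Bool × V)) ∈ c.edges) →
      l + 2 ≤ c.length := by
  classical
  rintro x c - hodd ⟨u, hu⟩
  have hsplit : c.length = c.ofBoxProdLeft.length + c.ofBoxProdRight.length :=
    Walk.length_boxProd (G := completeGraph Bool) c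
  have hleft_even : Even c.ofBoxProdLeft.length :=
    ((selfColoring _).even_length_iff_congr _).mpr Iff.rfl
  have hleft_pos := c.length_ofBoxProdLeft_pos hu Bool.true_eq_false.mp
  have hright_odd : Odd c.ofBoxProdRight.length :=
    (Nat.odd_add'.mp (hsplit ▸ hodd)).mpr hleft_even
  obtain ⟨w, q, hq, hq_odd, hq_le⟩ :=
    c.ofBoxProdRight.exists_isCycle_odd_length_le hright_odd
  have := hmin w q hq hq_odd
  obtain ⟨k, hk⟩ := hleft_even
  omega

/-- If the odd girth of `G` is `l`, then every odd cycle in `K₂ × G` containing a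
crossing edge has length at least `l + 2`. -/
theorem stmt0 {V : Type*} (G : SimpleGraph V) (l : ℕ) (hl : Odd l)
    (hex : ∃ (v : V) (c : G.Walk v v), c.IsCycle ∧ c.length = l)
    (hmin : ∀ (v : V) (c : G.Walk v v), c.IsCycle → Odd c.length → l ≤ c.length) :
    ∀ (x : Bool × V) (c : (K2Prod G).Walk x x), c.IsCycle → Odd c.length →
      (∃ u : V, s(((true, u) : Bool × V), ((false, u) : Bool × V)) ∈ c.edges) →
      l + 2 ≤ c.length :=
  stmt0_general G l hmin
end

section
/- The enhanced hypercube Q_{n,k} is a bipartite graph if and only if k is odd. -/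
open SimpleGraph

open Finset

/-!
Colour a bit string by the parity of its number of ones. A hypercube edge flips one bit
and a skip edge flips `k` bits, so for odd `k` this is a proper 2-colouring. Conversely,
flipping the bits `0, …, k-1` one at a time leads from `0⋯0` to `0⋯01⋯1` in `k` hypercube
steps, and one skip edge leads back: a closed walk of length `k + 1`, which must be even in
a bipartite graph.
-/

section BitParity

variable {ι : Type*} [Fintype ι]

def bitParity (v : ι → Bool) : ZMod 2 :=
  ∑ i, if v i then 1 else 0

lemma bitParity_add_bitParity (u v : ι → Bool) :
    bitParity u + bitParity v = (#{i | u i ≠ v i} : ZMod 2) := by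
  rw [bitParity, bitParity, ← sum_add_distrib, ← sum_boole]
  refine sum_congr rfl fun i _ => ?_
  cases u i <;> cases v i <;> decide

theorem colorable_two_of_forall_adj_odd_card_ne {G : SimpleGraph (ι → Bool)}
    (h : ∀ u v, G.Adj u v → Odd #{i | u i ≠ v i}) : G.Colorable 2 := by
  let c : G.Coloring (ZMod 2) := Coloring.mk bitParity fun {u v} hadj heq => by
    have hsum := bitParity_add_bitParity u v
    rw [heq, CharTwo.add_self_eq_zero, eq_comm, ZMod.natCast_eq_zero_iff_even] at hsum
    exact Nat.not_even_iff_odd.mpr (h u v hadj) hsum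
  simpa using c.colorable

end BitParity

section EnhancedHypercube

variable {n k : ℕ}

lemma card_ne_eq_one_of_hypercube_adj {u v : Fin n → Bool} (h : (hypercube n).Adj u v) :
    #{i | u i ≠ v i} = 1 := by
  obtain ⟨i, hi, huniq⟩ := h
  exact card_eq_one.2 ⟨i, by ext j; simpa using ⟨huniq j, fun hj => hj ▸ hi⟩⟩

lemma card_ne_eq_of_skipRel (hk : k ≤ n) {u v : Fin n → Bool} (h : skipRel n k u v) :
    #{i | u i ≠ v i} = k := by
  have hfilter : (univ.filter fun i => u i ≠ v i) = univ.filter fun i : Fin n => i.val < k :=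
    filter_congr fun i _ => ⟨fun hne => not_le.1 fun hki => hne ((h.2 i).2 hki), (h.2 i).1⟩
  rw [hfilter, Fin.card_filter_val_lt, min_eq_right hk]

lemma odd_card_ne_of_enhanced_adj (hk : Odd k) (hkn : k ≤ n) {u v : Fin n → Bool}
    (h : (enhanced n k).Adj u v) : Odd #{i | u i ≠ v i} := by
  rcases h with h | h
  · rw [card_ne_eq_one_of_hypercube_adj h]
    exact odd_one
  · rwa [card_ne_eq_of_skipRel hkn h]

def lowOnes (n j : ℕ) : Fin n → Bool :=
  fun i => decide (i.val < j)

lemma hypercube_adj_lowOnes_succ {j : ℕ} (hj : j < n) :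
    (hypercube n).Adj (lowOnes n j) (lowOnes n (j + 1)) :=
  ⟨⟨j, hj⟩, by simp [lowOnes], fun i hi => Fin.ext <| show i.val = j by
    simp only [lowOnes, ne_eq, decide_eq_decide] at hi; omega⟩

lemma exists_walk_lowOnes {j : ℕ} (hj : j ≤ n) :
    ∃ w : (hypercube n).Walk (lowOnes n 0) (lowOnes n j), w.length = j := by
  induction j with
  | zero => exact ⟨Walk.nil, rfl⟩
  | succ j ih =>
    obtain ⟨w, hw⟩ := ih (by omega)
    exact ⟨w.concat (hypercube_adj_lowOnes_succ hj), by rw [Walk.length_concat, hw]⟩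

lemma skipRel_lowOnes (hk : 1 ≤ k) (hkn : k ≤ n) :
    skipRel n k (lowOnes n k) (lowOnes n 0) := by
  refine ⟨fun heq => ?_, fun i =>
    ⟨fun hi => by simp [lowOnes, hi], fun hi => by simp [lowOnes, hi.not_gt]⟩⟩
  have h0 := congrFun heq ⟨0, by omega⟩
  simp only [lowOnes, lt_self_iff_false, decide_false, decide_eq_false_iff_not, not_lt] at h0
  omega

lemma hypercube_le_enhanced : hypercube n ≤ enhanced n k :=
  fun _ _ => Or.inl

lemma odd_of_enhanced_colorable (hk : 1 ≤ k) (hkn : k ≤ n) (hc : (enhanced n k).Colorable 2) :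
    Odd k := by
  obtain ⟨w, hw⟩ := exists_walk_lowOnes hkn
  have hskip : (enhanced n k).Adj (lowOnes n k) (lowOnes n 0) := Or.inr (skipRel_lowOnes hk hkn)
  have heven :=
    two_colorable_iff_forall_loop_even.1 hc _ ((w.mapLe hypercube_le_enhanced).concat hskip)
  rwa [Walk.length_concat, Walk.length_mapLe, hw, Nat.even_add_one, Nat.not_even_iff_odd] at heven

end EnhancedHypercube

/-- The enhanced hypercube `Q_{n,k}` is bipartite if and only if `k` is odd. -/
theorem stmt5 (n k : ℕ) (h1 : 1 ≤ k) (h2 : k ≤ n) :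
    (enhanced n k).Colorable 2 ↔ Odd k :=
  ⟨odd_of_enhanced_colorable h1 h2, fun hk =>
    colorable_two_of_forall_adj_odd_card_ne fun _ _ => odd_card_ne_of_enhanced_adj hk h2⟩
end

section
/- If k is even, then every edge of Q_{n,k} that is a skip edge or an i-dimensional hypercube edge with 1 ≤ i ≤ k lies on an odd cycle of length k + 1. -/
open SimpleGraph

namespace Stmt15Aux

variable {n k : ℕ}

def flipOne (i : Fin n) (u : Fin n → Bool) : Fin n → Bool :=
  Function.update u i (!u i)

lemma flipOne_apply (i j : Fin n) (u : Fin n → Bool) :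
    flipOne i u j = if j = i then !u i else u j := by
  simp [flipOne, Function.update_apply]

lemma adj_flipOne (i : Fin n) (u : Fin n → Bool) :
    (hypercube n).Adj u (flipOne i u) := by
  refine ⟨i, ?_, ?_⟩
  · simp [flipOne_apply]
  · intro j hj
    by_contra h
    rw [flipOne_apply, if_neg h] at hj
    exact hj rfl

@[reducible] def flips : List (Fin n) → (Fin n → Bool) → (Fin n → Bool)
  | [], u => u
  | i :: L, u => flips L (flipOne i u)

def flipWalk (n k : ℕ) : (L : List (Fin n)) → (u : Fin n → Bool) →
    (enhanced n k).Walk u (flips L u)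
  | [], u => Walk.nil
  | i :: L, u => Walk.cons (show (enhanced n k).Adj u (flipOne i u) from Or.inl (adj_flipOne i u)) (flipWalk n k L (flipOne i u))

lemma length_flipWalk (L : List (Fin n)) (u : Fin n → Bool) :
    (flipWalk n k L u).length = L.length := by
  induction L generalizing u with
  | nil => rfl
  | cons i L ih => simp [flipWalk, ih]

lemma flips_eq {L : List (Fin n)} (hL : L.Nodup) (u : Fin n → Bool) (j : Fin n) :
    flips L u j = if j ∈ L then !u j else u j := by
  induction L generalizing u with
  | nil => simp [flips]
  | cons i L ih =>
    rw [flips, ih hL.of_cons]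
    by_cases hji : j = i
    · subst hji
      simp [(List.nodup_cons.mp hL).1, flipOne_apply]
    · simp [flipOne_apply, hji]

lemma mem_support_flipWalk {L : List (Fin n)} {u x : Fin n → Bool} :
    x ∈ (flipWalk n k L u).support ↔ ∃ P, P <+: L ∧ x = flips P u := by
  induction L generalizing u with
  | nil =>
    simp only [flipWalk, Walk.support_nil, List.mem_singleton]
    constructor
    · rintro rfl; exact ⟨[], List.nil_prefix, rfl⟩
    · rintro ⟨P, hP, rfl⟩
      rw [List.prefix_nil.mp hP]
  | cons i L ih =>
    simp only [flipWalk, Walk.support_cons, List.mem_cons, ih]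
    constructor
    · rintro (rfl | ⟨P, hP, rfl⟩)
      · exact ⟨[], List.nil_prefix, rfl⟩
      · exact ⟨i :: P, List.cons_prefix_cons.mpr ⟨rfl, hP⟩, rfl⟩
    · rintro ⟨P, hP, rfl⟩
      cases P with
      | nil => exact Or.inl rfl
      | cons a P =>
        obtain ⟨rfl, hP2⟩ := List.cons_prefix_cons.mp hP
        exact Or.inr ⟨P, hP2, rfl⟩

lemma support_nodup {L : List (Fin n)} (hL : L.Nodup) (u : Fin n → Bool) :
    (flipWalk n k L u).support.Nodup := by
  induction L generalizing u with
  | nil => simp [flipWalk]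
  | cons i L ih =>
    rw [flipWalk, Walk.support_cons, List.nodup_cons]
    refine ⟨?_, ih hL.of_cons _⟩
    intro hu
    obtain ⟨P, hP, hx⟩ := mem_support_flipWalk.mp hu
    have hnd : (i :: P).Nodup :=
      List.Nodup.sublist (List.cons_prefix_cons.mpr ⟨rfl, hP⟩).sublist hL
    have : flips (i :: P) u i = !u i := by
      rw [flips_eq hnd, if_pos List.mem_cons_self]
    rw [show flips (i :: P) u = flips P (flipOne i u) from rfl, ← hx] at this
    exact Bool.not_ne_self (u i) this.symm

lemma edges_flipWalk {L : List (Fin n)} {u : Fin n → Bool} {e : Sym2 (Fin n → Bool)}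
    (he : e ∈ (flipWalk n k L u).edges) : ∃ x i, e = s(x, flipOne i x) := by
  induction L generalizing u with
  | nil => simp [flipWalk] at he
  | cons i L ih =>
    rw [flipWalk, Walk.edges_cons, List.mem_cons] at he
    rcases he with rfl | he
    · exact ⟨u, i, rfl⟩
    · exact ih he

lemma ne_flipOne_iff (x : Fin n → Bool) (i j : Fin n) :
    (x j ≠ flipOne i x j) ↔ j = i := by
  rw [flipOne_apply]
  by_cases h : j = i <;> simp [h]

lemma sym2_one_bit {u v x : Fin n → Bool} {i : Fin n}
    (h : s(u, v) = s(x, flipOne i x)) {j₁ j₂ : Fin n} (hne : j₁ ≠ j₂)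
    (hd1 : u j₁ ≠ v j₁) (hd2 : u j₂ ≠ v j₂) : False := by
  rw [Sym2.eq_iff] at h
  rcases h with ⟨rfl, rfl⟩ | ⟨h1, rfl⟩
  · exact hne (((ne_flipOne_iff u i j₁).mp hd1).trans ((ne_flipOne_iff u i j₂).mp hd2).symm)
  · subst h1
    have hd1' : v j₁ ≠ flipOne i v j₁ := fun h => hd1 h.symm
    have hd2' : v j₂ ≠ flipOne i v j₂ := fun h => hd2 h.symm
    exact hne (((ne_flipOne_iff v i j₁).mp hd1').trans ((ne_flipOne_iff v i j₂).mp hd2').symm)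

end Stmt15Aux

open Stmt15Aux

/-- If `k` is even, every edge of `Q_{n,k}` that is a skip edge or an
`i`-dimensional hypercube edge with `i ≤ k` lies on an odd cycle of length
`k + 1`. -/
theorem stmt15 (n k : ℕ) (hk : Even k) (h1 : 2 ≤ k) (h2 : k ≤ n) (hn : 3 ≤ n) :
    ∀ u v : Fin n → Bool,
      (skipRel n k u v ∨ ∃ i : Fin n, i.val < k ∧ ∀ j, u j ≠ v j ↔ j = i) →
      EdgeOnCycle (enhanced n k) s(u, v) (k + 1) := by
  intro u v hedge
  have hn2 : 2 ≤ n := le_trans h1 h2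
  -- the list of all "low" indices
  have hLf : ∃ Lf : List (Fin n), Lf.Nodup ∧ Lf.length = k ∧ ∀ j : Fin n, j ∈ Lf ↔ j.val < k := by
    refine ⟨(List.finRange k).map (Fin.castLE h2),
      (List.nodup_finRange k).map (Fin.castLE_injective h2), by simp, ?_⟩
    intro j
    simp only [List.mem_map, List.mem_finRange, true_and]
    constructor
    · rintro ⟨m, rfl⟩; exact m.isLt
    · intro hj; exact ⟨⟨j.val, hj⟩, Fin.ext rfl⟩
  obtain ⟨Lf, hnd, hlen, hmem⟩ := hLf
  rcases hedge with hskip | ⟨i, hik, hiv⟩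
  · -- skip edge case
    have hflips : flips Lf v = u := by
      funext j
      rw [flips_eq hnd]
      by_cases hj : j.val < k
      · rw [if_pos ((hmem j).mpr hj)]
        have := (hskip.2 j).1 hj
        cases hu' : u j <;> cases hv' : v j <;> simp_all
      · rw [if_neg (fun hm => hj ((hmem j).mp hm))]
        exact ((hskip.2 j).2 (le_of_not_gt hj)).symm
    refine ⟨u, Walk.cons (show (enhanced n k).Adj u v from Or.inr hskip) ((flipWalk n k Lf v).copy rfl hflips), ?_, ?_, ?_⟩
    · rw [Walk.cons_isCycle_iff]
      refine ⟨Walk.IsPath.mk' ?_, ?_⟩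
      · rw [Walk.support_copy]; exact support_nodup hnd v
      · intro hmem'
        rw [Walk.edges_copy] at hmem'
        obtain ⟨x, i, he⟩ := edges_flipWalk hmem'
        have h0 : (⟨0, by omega⟩ : Fin n) ≠ (⟨1, by omega⟩ : Fin n) := by
          simp [Fin.ext_iff]
        exact sym2_one_bit he h0 ((hskip.2 _).1 (show (0:ℕ) < k by omega))
          ((hskip.2 _).1 (show (1:ℕ) < k by omega))
    · simp [Walk.length_copy, length_flipWalk, hlen]
    · rw [Walk.edges_cons]; exact List.mem_cons_self
  · -- hypercube edge case, dimension i < k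
    set u' : Fin n → Bool := fun j => if j.val < k then !u j else u j with hu'def
    have hu'apply : ∀ j : Fin n, j.val < k → u' j = !u j := by
      intro j hj; simp [hu'def, hj]
    have hu'apply' : ∀ j : Fin n, k ≤ j.val → u' j = u j := by
      intro j hj; simp [hu'def, Nat.not_lt.mpr hj]
    have hskipuu' : skipRel n k u u' := by
      refine ⟨?_, ?_⟩
      · intro h
        have := congrFun h ⟨0, by omega⟩
        rw [hu'apply _ (show (0:ℕ) < k by omega)] at this
        exact Bool.not_ne_self _ this.symm
      · intro j
        refine ⟨fun hj => ?_, fun hj => (hu'apply' j hj).symm⟩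
        rw [hu'apply j hj]
        exact fun h => Bool.not_ne_self (u j) h.symm
    have huvi : u i ≠ v i := (hiv i).mpr rfl
    have huvj : ∀ j, j ≠ i → u j = v j := fun j hj =>
      not_not.mp (fun h => hj ((hiv j).mp h))
    set Li : List (Fin n) := Lf.erase i with hLi
    have hiLf : i ∈ Lf := (hmem i).mpr hik
    have hndLi : Li.Nodup := hnd.erase i
    have hmemLi : ∀ j : Fin n, j ∈ Li ↔ j ≠ i ∧ j.val < k := by
      intro j
      rw [hLi, hnd.mem_erase_iff]
      exact and_congr_right fun _ => hmem j
    have hlenLi : Li.length = k - 1 := by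
      rw [hLi, List.length_erase_of_mem hiLf, hlen]
    have hflips : flips Li u' = v := by
      funext j
      rw [flips_eq hndLi]
      by_cases hj : j ∈ Li
      · obtain ⟨hji, hjk⟩ := (hmemLi j).mp hj
        rw [if_pos hj, hu'apply j hjk, Bool.not_not]
        exact huvj j hji
      · rw [if_neg hj]
        by_cases hjk : j.val < k
        · have hji : j = i := by
            by_contra hji
            exact hj ((hmemLi j).mpr ⟨hji, hjk⟩)
          subst hji
          rw [hu'apply j hjk]
          cases hu1 : u j <;> cases hv1 : v j <;> simp_all
        · rw [hu'apply' j (Nat.le_of_not_lt hjk)]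
          exact huvj j (fun h => hjk (h ▸ hik))
    have hadj_uv : (hypercube n).Adj u v := ⟨i, huvi, fun j hj => (hiv j).mp hj⟩
    have hu_not_mem : u ∉ ((flipWalk n k Li u').support) := by
      intro hu
      obtain ⟨P, hP, hx⟩ := mem_support_flipWalk.mp hu
      have hiP : i ∉ P := fun hiP =>
        (((hmemLi i).mp (hP.sublist.subset hiP)).1) rfl
      have hndP : P.Nodup := List.Nodup.sublist hP.sublist hndLi
      have : flips P u' i = u' i := by rw [flips_eq hndP, if_neg hiP]
      rw [← hx, hu'apply i hik] at this
      exact Bool.not_ne_self _ this.symm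
    refine ⟨v, Walk.cons (show (enhanced n k).Adj v u from Or.inl ((hypercube n).adj_symm hadj_uv))
      (Walk.cons (show (enhanced n k).Adj u u' from Or.inr hskipuu') ((flipWalk n k Li u').copy rfl hflips)), ?_, ?_, ?_⟩
    · rw [Walk.cons_isCycle_iff]
      constructor
      · refine Walk.IsPath.mk' ?_
        rw [Walk.support_cons, Walk.support_copy, List.nodup_cons]
        exact ⟨hu_not_mem, support_nodup hndLi u'⟩
      · rw [Walk.edges_cons, Walk.edges_copy, List.mem_cons]
        rintro (he | he)
        · rw [Sym2.eq_iff] at he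
          rcases he with ⟨rfl, -⟩ | ⟨hvu', -⟩
          · exact huvi rfl
          · -- v = u' impossible: pick a low index j ≠ i
            obtain ⟨j, hjk, hji⟩ : ∃ j : Fin n, j.val < k ∧ j ≠ i := by
              by_cases h0 : i = ⟨0, by omega⟩
              · exact ⟨⟨1, by omega⟩, show (1:ℕ) < k by omega,
                  by rw [h0]; simp [Fin.ext_iff]⟩
              · exact ⟨⟨0, by omega⟩, show (0:ℕ) < k by omega, fun h => h0 h.symm⟩
            have h1' := congrFun hvu' j
            rw [hu'apply j hjk, ← huvj j hji] at h1'
            exact Bool.not_ne_self _ h1'.symm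
        · exact hu_not_mem (Walk.snd_mem_support_of_mem_edges _ he)
    · simp only [Walk.length_cons, Walk.length_copy, length_flipWalk, hlenLi]
      omega
    · rw [Walk.edges_cons, Sym2.eq_swap]
      exact List.mem_cons_self
end
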